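/- If a strategy profile Λ = (λ_1,...,λ_n) is a doomsday equilibrium in an n-player imperfect-information game, then for every player i, every finite prefix κ of the observation sequence Obs_i(outcome(Λ)) is good for retaliation for player i: there exists an observation-based strategy λ_i^R such that for every finite play π compatible with κ (i.e., Obs_i(π) = κ) and ending in a state of S_i, every play in outcome(π, λ_i^R) belongs to φ_i ∪ ⋂_{j=1}^n (S^ω \ φ_j). -/

import Mathlib

/-- An n-player game arena with imperfect information: `obs i` gives player `i`'s
observation of each state (a function into `O` represents the partition `O_i`). -/
structure IArena (S A O : Type*) (n : ℕ) where
  owner : S → Fin n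
  init : S
  trans : S → A → S
  obs : Fin n → S → O

/-- A finite history: the list of past (state, action) pairs together with the current state. -/
abbrev Hist (S A : Type*) := List (S × A) × S

variable {S A O : Type*} {n : ℕ}

/-- A play `ρ = s₀ σ₀ s₁ σ₁ ⋯`, given by its state and action sequences. -/
def IsPlaySeq (G : IArena S A O n) (ρ : (ℕ → S) × (ℕ → A)) : Prop :=
  ρ.1 0 = G.init ∧ ∀ j : ℕ, ρ.1 (j + 1) = G.trans (ρ.1 j) (ρ.2 j)

/-- The finite history of the play `ρ` up to position `j`. -/
def histAt (ρ : (ℕ → S) × (ℕ → A)) (j : ℕ) : Hist S A :=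
  ((List.range j).map (fun k => (ρ.1 k, ρ.2 k)), ρ.1 j)

/-- Player `i`'s observation of a finite history: states are replaced by observations and
other players' actions are hidden (`none` plays the role of `τ`). -/
def obsPrefix (G : IArena S A O n) (i : Fin n) (h : Hist S A) : List (O × Option A) × O :=
  (h.1.map (fun p => (G.obs i p.1, if G.owner p.1 = i then some p.2 else none)), G.obs i h.2)

/-- Player `i`'s observation sequence of an infinite play. -/
def obsPlay (G : IArena S A O n) (i : Fin n) (ρ : (ℕ → S) × (ℕ → A)) : ℕ → O × Option A :=
  fun j => (G.obs i (ρ.1 j), if G.owner (ρ.1 j) = i then some (ρ.2 j) else none)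

/-- A strategy is observation-based if it agrees on observationally equivalent histories. -/
def ObsBased (G : IArena S A O n) (i : Fin n) (str : Hist S A → A) : Prop :=
  ∀ h1 h2 : Hist S A, obsPrefix G i h1 = obsPrefix G i h2 → str h1 = str h2

/-- The play `ρ` is consistent with the strategy `str` of player `i`. -/
def ConsistentI (G : IArena S A O n) (i : Fin n) (str : Hist S A → A) (ρ : (ℕ → S) × (ℕ → A)) :
    Prop :=
  ∀ j : ℕ, G.owner (ρ.1 j) = i → ρ.2 j = str (histAt ρ j)

/-- The history of the unique play determined by the strategy profile `Λ`. -/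
def outHistI (G : IArena S A O n) (Λ : Fin n → Hist S A → A) : ℕ → Hist S A
  | 0 => ([], G.init)
  | j + 1 =>
    let h := outHistI G Λ j
    let a := Λ (G.owner h.2) h
    (h.1 ++ [(h.2, a)], G.trans h.2 a)

/-- The unique play determined by the strategy profile `Λ`. -/
def outPlayI (G : IArena S A O n) (Λ : Fin n → Hist S A → A) : (ℕ → S) × (ℕ → A) :=
  (fun j => (outHistI G Λ j).2,
   fun j => Λ (G.owner (outHistI G Λ j).2) (outHistI G Λ j))

/-- Doomsday equilibrium for imperfect-information games: an observation-based profile whose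
outcome satisfies every objective, and such that any play consistent with `λ_i` violating
`φ i` violates every objective. -/
def IsDEI (G : IArena S A O n) (φ : Fin n → Set (ℕ → S)) (Λ : Fin n → Hist S A → A) : Prop :=
  (∀ i : Fin n, ObsBased G i (Λ i)) ∧
  (∀ i : Fin n, (outPlayI G Λ).1 ∈ φ i) ∧
  (∀ i : Fin n, ∀ ρ : (ℕ → S) × (ℕ → A), IsPlaySeq G ρ → ConsistentI G i (Λ i) ρ →
    ρ.1 ∉ φ i → ∀ j : Fin n, ρ.1 ∉ φ j)

/-- An observation sequence is doomsday compatible for player `i` if every compatible play is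
winning for `i` or losing for everyone. -/
def DoomsdayCompatible (G : IArena S A O n) (i : Fin n) (φ : Fin n → Set (ℕ → S))
    (η : ℕ → O × Option A) : Prop :=
  ∀ ρ : (ℕ → S) × (ℕ → A), IsPlaySeq G ρ → obsPlay G i ρ = η →
    (ρ.1 ∈ φ i ∨ ∀ j : Fin n, ρ.1 ∉ φ j)

/-- A finite observation prefix `κ` is good for retaliation for player `i`: there is an
observation-based strategy such that from any finite play compatible with `κ` and ending in a
state of player `i`, every continuation consistent with it is winning for `i` or losing for
everyone. -/
def GoodForRetaliation (G : IArena S A O n) (i : Fin n) (φ : Fin n → Set (ℕ → S))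
    (κ : List (O × Option A) × O) : Prop :=
  ∃ str : Hist S A → A, ObsBased G i str ∧
    ∀ π : Hist S A, obsPrefix G i π = κ → G.owner π.2 = i →
      ∀ ρ : (ℕ → S) × (ℕ → A), IsPlaySeq G ρ → histAt ρ π.1.length = π →
        (∀ j : ℕ, π.1.length ≤ j → G.owner (ρ.1 j) = i → ρ.2 j = str (histAt ρ j)) →
        (ρ.1 ∈ φ i ∨ ∀ j : Fin n, ρ.1 ∉ φ j)

/-! Before position `m`, player `i`'s own actions are part of her observations, so a play that
is observationally indistinguishable from the equilibrium outcome up to `m` has followed the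
observation-based `λ_i` up to `m`, exactly as the outcome did. If it continues with `λ_i`
afterwards, it is consistent with `λ_i` throughout, and the doomsday condition applies to it. -/

section Observations

variable (G : IArena S A O n) (i : Fin n)

lemma obsPrefix_histAt (ρ : (ℕ → S) × (ℕ → A)) (j : ℕ) :
    obsPrefix G i (histAt ρ j) = ((List.range j).map (obsPlay G i ρ), G.obs i (ρ.1 j)) := by
  simp only [obsPrefix, histAt, List.map_map]
  rfl

variable {G i}
variable {ρ σ : (ℕ → S) × (ℕ → A)}

lemma obsPlay_eq_of_obsPrefix_histAt_eq {j l : ℕ}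
    (h : obsPrefix G i (histAt ρ j) = obsPrefix G i (histAt σ l)) :
    j = l ∧ ∀ k < j, obsPlay G i ρ k = obsPlay G i σ k := by
  rw [obsPrefix_histAt, obsPrefix_histAt] at h
  have hmap := congrArg Prod.fst h
  have hjl : j = l := by simpa using congrArg List.length hmap
  subst hjl
  exact ⟨rfl, fun k hk => List.map_inj_left.mp hmap k (List.mem_range.mpr hk)⟩

lemma obsPrefix_histAt_eq_of_obsPlay_eq {j : ℕ}
    (h : ∀ k ≤ j, obsPlay G i ρ k = obsPlay G i σ k) :
    obsPrefix G i (histAt ρ j) = obsPrefix G i (histAt σ j) := by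
  rw [obsPrefix_histAt, obsPrefix_histAt]
  refine Prod.ext (List.map_inj_left.mpr fun k hk => h k (List.mem_range.mp hk).le) ?_
  exact congrArg Prod.fst (h j le_rfl)

lemma owner_eq_and_snd_eq_of_obsPlay_eq {k : ℕ} (h : obsPlay G i ρ k = obsPlay G i σ k)
    (hown : G.owner (ρ.1 k) = i) : G.owner (σ.1 k) = i ∧ ρ.2 k = σ.2 k := by
  have hact := congrArg Prod.snd h
  simp only [obsPlay, hown, if_true] at hact
  by_cases hσ : G.owner (σ.1 k) = i
  · rw [if_pos hσ] at hact
    exact ⟨hσ, Option.some.inj hact⟩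
  · rw [if_neg hσ] at hact
    exact absurd hact (Option.some_ne_none _)

lemma ConsistentI.snd_eq_of_obsPlay_eq {str : Hist S A → A} (hstr : ObsBased G i str)
    (hσ : ConsistentI G i str σ) {j : ℕ} (h : ∀ k ≤ j, obsPlay G i ρ k = obsPlay G i σ k)
    (hown : G.owner (ρ.1 j) = i) : ρ.2 j = str (histAt ρ j) := by
  obtain ⟨hσown, hact⟩ := owner_eq_and_snd_eq_of_obsPlay_eq (h j le_rfl) hown
  rw [hact, hσ j hσown]
  exact hstr _ _ (obsPrefix_histAt_eq_of_obsPlay_eq h).symm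

end Observations

section Outcome

variable (G : IArena S A O n) (Λ : Fin n → Hist S A → A)

lemma histAt_outPlayI (j : ℕ) : histAt (outPlayI G Λ) j = outHistI G Λ j := by
  induction j with
  | zero => simp [histAt, outHistI, outPlayI]
  | succ k ih =>
    have h1 : (outHistI G Λ k).1 = (List.range k).map
        (fun l => ((outPlayI G Λ).1 l, (outPlayI G Λ).2 l)) := congrArg Prod.fst ih.symm
    simp only [histAt, outHistI, outPlayI, List.range_succ, List.map_append, List.map_cons,
      List.map_nil]
    exact Prod.ext (by rw [h1]; rfl) rfl

lemma consistentI_outPlayI (i : Fin n) : ConsistentI G i (Λ i) (outPlayI G Λ) := by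
  intro j hown
  rw [histAt_outPlayI, ← hown]
  rfl

end Outcome

theorem de_prefixes_good_for_retaliation (G : IArena S A O n) (φ : Fin n → Set (ℕ → S))
    (Λ : Fin n → Hist S A → A) (hDE : IsDEI G φ Λ) (i : Fin n) (m : ℕ) :
    GoodForRetaliation G i φ (obsPrefix G i (histAt (outPlayI G Λ) m)) := by
  obtain ⟨hObs, -, hDoom⟩ := hDE
  refine ⟨Λ i, hObs i, fun π hπ _ ρ hρ hhist hfollow => ?_⟩
  rw [← hhist] at hπ
  obtain ⟨rfl, hagree⟩ := obsPlay_eq_of_obsPrefix_histAt_eq hπ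
  have hcons : ConsistentI G i (Λ i) ρ := by
    intro j hown
    rcases lt_or_ge j π.1.length with hlt | hge
    · exact (consistentI_outPlayI G Λ i).snd_eq_of_obsPlay_eq (hObs i)
        (fun k hk => hagree k (hk.trans_lt hlt)) hown
    · exact hfollow j hge hown
  by_cases hwin : ρ.1 ∈ φ i
  · exact Or.inl hwin
  · exact Or.inr (hDoom i ρ hρ hcons hwin)
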